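/- Fix α ∈ (0,1) and b ∈ (0,1], and let χ²_α be the (1−α)-quantile of the central χ²₁ distribution. Then D(b,λ) = ∫₀^{χ²_α} [g(v;λ)G(v/b) + g(v)G(v/b;λ)] dv − G(χ²_α;λ) satisfies lim_{λ→∞} D(b,λ) = 0; moreover 0 ≤ ∫₀^{χ²_α}[g(v;λ)G(v/b) + g(v)G(v/b;λ)]dv ≤ G(χ²_α/b)·G(χ²_α;λ) + G(χ²_α)·G(χ²_α/b;λ). -/

import Mathlib

open MeasureTheory ProbabilityTheory Real Set Filter

/-- Standard normal density. -/
noncomputable def stdNormalPDF (x : ℝ) : ℝ :=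
  (Real.sqrt (2 * Real.pi))⁻¹ * Real.exp (-(x ^ 2) / 2)

/-- Standard normal CDF. -/
noncomputable def stdNormalCDF (x : ℝ) : ℝ :=
  ∫ t in Set.Iic x, stdNormalPDF t

/-- Density of the noncentral chi-square distribution with 1 degree of freedom
and noncentrality `l`, i.e. the density of `X²` with `X ~ N(√l, 1)`. -/
noncomputable def ncChiSqPDF (l v : ℝ) : ℝ :=
  if 0 < v then
    (2 * Real.sqrt v)⁻¹ *
      (stdNormalPDF (Real.sqrt v - Real.sqrt l) + stdNormalPDF (Real.sqrt v + Real.sqrt l))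
  else 0

/-- CDF of the noncentral chi-square distribution with 1 degree of freedom
and noncentrality `l`. -/
noncomputable def ncChiSqCDF (l v : ℝ) : ℝ :=
  stdNormalCDF (Real.sqrt l + Real.sqrt v) - stdNormalCDF (Real.sqrt l - Real.sqrt v)

/-! ### Auxiliary lemmas on the standard normal density and CDF -/

lemma snpdf_nonneg (x : ℝ) : 0 ≤ stdNormalPDF x := by
  unfold stdNormalPDF; positivity

lemma snpdf_cont : Continuous stdNormalPDF := by
  unfold stdNormalPDF; continuity

lemma snpdf_integrable : Integrable stdNormalPDF := by
  have h : Integrable (fun x : ℝ => Real.exp (-(1/2 : ℝ) * x ^ 2)) :=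
    integrable_exp_neg_mul_sq (by norm_num)
  have := h.const_mul (Real.sqrt (2 * Real.pi))⁻¹
  refine this.congr (Eventually.of_forall fun x => ?_)
  unfold stdNormalPDF
  ring_nf

lemma snpdf_le (x : ℝ) : stdNormalPDF x ≤ (Real.sqrt (2 * Real.pi))⁻¹ := by
  unfold stdNormalPDF
  have h1 : Real.exp (-(x ^ 2) / 2) ≤ 1 := by
    rw [Real.exp_le_one_iff]; nlinarith [sq_nonneg x]
  have h2 : (0:ℝ) ≤ (Real.sqrt (2 * Real.pi))⁻¹ := by positivity
  nlinarith

lemma snpdf_even (x : ℝ) : stdNormalPDF (-x) = stdNormalPDF x := by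
  unfold stdNormalPDF; rw [neg_sq]

lemma sncdf_sub (x y : ℝ) :
    stdNormalCDF y - stdNormalCDF x = ∫ t in x..y, stdNormalPDF t := by
  unfold stdNormalCDF
  exact intervalIntegral.integral_Iic_sub_Iic snpdf_integrable.integrableOn
    snpdf_integrable.integrableOn

lemma sncdf_mono : Monotone stdNormalCDF := by
  intro x y hxy
  have h := sncdf_sub x y
  have h2 : 0 ≤ ∫ t in x..y, stdNormalPDF t :=
    intervalIntegral.integral_nonneg hxy fun t _ => snpdf_nonneg t
  linarith

lemma sncdf_hasDerivAt (x : ℝ) : HasDerivAt stdNormalCDF (stdNormalPDF x) x := by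
  have key : ∀ y, stdNormalCDF y = stdNormalCDF 0 + ∫ t in (0:ℝ)..y, stdNormalPDF t := by
    intro y; have := sncdf_sub 0 y; linarith
  have hd : HasDerivAt (fun y => ∫ t in (0:ℝ)..y, stdNormalPDF t) (stdNormalPDF x) x :=
    intervalIntegral.integral_hasDerivAt_right
      snpdf_integrable.intervalIntegrable
      snpdf_cont.aestronglyMeasurable.stronglyMeasurableAtFilter
      snpdf_cont.continuousAt
  have h2 := hd.const_add (stdNormalCDF 0)
  exact h2.congr_of_eventuallyEq (Eventually.of_forall fun y => (key y))

lemma sncdf_cont : Continuous stdNormalCDF :=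
  continuous_iff_continuousAt.2 fun x => (sncdf_hasDerivAt x).continuousAt

lemma snpdf_total : ∫ x, stdNormalPDF x = 1 := by
  unfold stdNormalPDF
  rw [MeasureTheory.integral_const_mul]
  have h : ∫ x : ℝ, Real.exp (-(x ^ 2) / 2) = Real.sqrt (2 * Real.pi) := by
    have := integral_gaussian (1/2 : ℝ)
    have h2 : ∀ x : ℝ, Real.exp (-(1/2:ℝ) * x ^ 2) = Real.exp (-(x ^ 2) / 2) := by
      intro x; ring_nf
    rw [show (fun x : ℝ => Real.exp (-(1/2:ℝ) * x ^ 2)) = fun x : ℝ => Real.exp (-(x ^ 2) / 2)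
      from funext h2] at this
    rw [this]
    congr 1; ring
  rw [h]
  rw [inv_mul_cancel₀ (by positivity : Real.sqrt (2 * Real.pi) ≠ 0)]

lemma sncdf_nonneg (x : ℝ) : 0 ≤ stdNormalCDF x :=
  MeasureTheory.setIntegral_nonneg measurableSet_Iic fun t _ => snpdf_nonneg t

lemma sncdf_le_one (x : ℝ) : stdNormalCDF x ≤ 1 := by
  rw [← snpdf_total]
  exact MeasureTheory.setIntegral_le_integral snpdf_integrable
    (Eventually.of_forall snpdf_nonneg)

/-! ### Auxiliary lemmas on the noncentral chi-square distribution -/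

lemma ncpdf_nonneg (l v : ℝ) : 0 ≤ ncChiSqPDF l v := by
  unfold ncChiSqPDF
  split
  · have := snpdf_nonneg (Real.sqrt v - Real.sqrt l)
    have := snpdf_nonneg (Real.sqrt v + Real.sqrt l)
    have : (0:ℝ) ≤ (2 * Real.sqrt v)⁻¹ := by positivity
    positivity
  · exact le_refl 0

lemma nccdf_nonneg (l v : ℝ) : 0 ≤ ncChiSqCDF l v := by
  unfold ncChiSqCDF
  have h : Real.sqrt l - Real.sqrt v ≤ Real.sqrt l + Real.sqrt v := by
    have := Real.sqrt_nonneg v; linarith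
  linarith [sncdf_mono h]

lemma nccdf_le_one (l v : ℝ) : ncChiSqCDF l v ≤ 1 := by
  unfold ncChiSqCDF
  linarith [sncdf_le_one (Real.sqrt l + Real.sqrt v), sncdf_nonneg (Real.sqrt l - Real.sqrt v)]

lemma nccdf_mono_v (l : ℝ) : Monotone (ncChiSqCDF l) := by
  intro v w hvw
  unfold ncChiSqCDF
  have h := Real.sqrt_le_sqrt hvw
  have h1 := sncdf_mono (by linarith : Real.sqrt l + Real.sqrt v ≤ Real.sqrt l + Real.sqrt w)
  have h2 := sncdf_mono (by linarith : Real.sqrt l - Real.sqrt w ≤ Real.sqrt l - Real.sqrt v)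
  linarith

lemma nccdf_zero (l : ℝ) : ncChiSqCDF l 0 = 0 := by
  unfold ncChiSqCDF
  rw [Real.sqrt_zero]; ring

lemma nccdf_nonpos (l v : ℝ) (hv : v ≤ 0) : ncChiSqCDF l v = 0 := by
  unfold ncChiSqCDF
  rw [show Real.sqrt v = 0 from Real.sqrt_eq_zero'.mpr hv]
  ring

lemma ncpdf_measurable (l : ℝ) : Measurable (ncChiSqPDF l) := by
  unfold ncChiSqPDF
  refine Measurable.ite (measurableSet_Ioi) ?_ measurable_const
  apply Measurable.mul
  · exact ((measurable_const.mul Real.continuous_sqrt.measurable)).inv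
  · exact ((snpdf_cont.measurable.comp (Real.continuous_sqrt.measurable.sub measurable_const))).add
      ((snpdf_cont.measurable.comp (Real.continuous_sqrt.measurable.add measurable_const)))

lemma ncpdf_le (l v : ℝ) (hv : 0 < v) :
    ncChiSqPDF l v ≤ (Real.sqrt (2 * Real.pi))⁻¹ * (Real.sqrt v)⁻¹ := by
  unfold ncChiSqPDF
  rw [if_pos hv]
  have hs : 0 < Real.sqrt v := Real.sqrt_pos.2 hv
  have h1 := snpdf_le (Real.sqrt v - Real.sqrt l)
  have h2 := snpdf_le (Real.sqrt v + Real.sqrt l)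
  have h3 : (0:ℝ) < (2 * Real.sqrt v)⁻¹ := by positivity
  calc (2 * Real.sqrt v)⁻¹ *
      (stdNormalPDF (Real.sqrt v - Real.sqrt l) + stdNormalPDF (Real.sqrt v + Real.sqrt l))
      ≤ (2 * Real.sqrt v)⁻¹ * (2 * (Real.sqrt (2 * Real.pi))⁻¹) := by
        apply mul_le_mul_of_nonneg_left (by linarith) h3.le
    _ = (Real.sqrt (2 * Real.pi))⁻¹ * (Real.sqrt v)⁻¹ := by
        field_simp

lemma intInt_of_bound (f : ℝ → ℝ) (z C : ℝ) (hz : 0 ≤ z)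
    (hm : AEStronglyMeasurable f (volume.restrict (Set.uIoc (0:ℝ) z)))
    (hbound : ∀ v ∈ Ioc (0:ℝ) z, |f v| ≤ C * (Real.sqrt v)⁻¹) :
    IntervalIntegrable f volume 0 z := by
  have hg : IntervalIntegrable (fun v : ℝ => C * v ^ (-(1/2) : ℝ)) volume 0 z :=
    (intervalIntegral.intervalIntegrable_rpow' (by norm_num)).const_mul C
  apply hg.mono_fun' hm
  rw [uIoc_of_le hz]
  refine (MeasureTheory.ae_restrict_iff' measurableSet_Ioc).2 ?_
  filter_upwards with v hv
  have hvpos : 0 < v := hv.1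
  have key : C * v ^ (-(1/2) : ℝ) = C * (Real.sqrt v)⁻¹ := by
    rw [Real.rpow_neg hvpos.le, Real.sqrt_eq_rpow]
  rw [key]
  simpa [Real.norm_eq_abs] using hbound v hv

lemma ncpdf_intervalIntegrable (l z : ℝ) (hz : 0 ≤ z) :
    IntervalIntegrable (ncChiSqPDF l) volume 0 z := by
  refine intInt_of_bound _ z ((Real.sqrt (2*Real.pi))⁻¹) hz
    ((ncpdf_measurable l).aestronglyMeasurable.restrict) (fun v hv => ?_)
  rw [abs_of_nonneg (ncpdf_nonneg l v)]
  exact ncpdf_le l v hv.1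

lemma nccdf_cont (l : ℝ) : Continuous (fun v => ncChiSqCDF l v) := by
  unfold ncChiSqCDF
  exact (sncdf_cont.comp (continuous_const.add Real.continuous_sqrt)).sub
    (sncdf_cont.comp (continuous_const.sub Real.continuous_sqrt))

lemma nccdf_hasDerivAt (l v : ℝ) (hv : 0 < v) :
    HasDerivAt (fun w => ncChiSqCDF l w) (ncChiSqPDF l v) v := by
  have hs : HasDerivAt Real.sqrt (1 / (2 * Real.sqrt v)) v := Real.hasDerivAt_sqrt hv.ne'
  have h1 : HasDerivAt (fun w => stdNormalCDF (Real.sqrt l + Real.sqrt w))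
      (stdNormalPDF (Real.sqrt l + Real.sqrt v) * (1 / (2 * Real.sqrt v))) v := by
    have := (sncdf_hasDerivAt (Real.sqrt l + Real.sqrt v)).comp v
      ((hasDerivAt_const v (Real.sqrt l)).add hs)
    simp only [zero_add] at this
    exact this
  have h2 : HasDerivAt (fun w => stdNormalCDF (Real.sqrt l - Real.sqrt w))
      (stdNormalPDF (Real.sqrt l - Real.sqrt v) * -(1 / (2 * Real.sqrt v))) v := by
    have := (sncdf_hasDerivAt (Real.sqrt l - Real.sqrt v)).comp v
      ((hasDerivAt_const v (Real.sqrt l)).sub hs)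
    simp only [zero_sub] at this
    exact this
  have h := h1.sub h2
  have heq : stdNormalPDF (Real.sqrt l + Real.sqrt v) * (1 / (2 * Real.sqrt v)) -
      stdNormalPDF (Real.sqrt l - Real.sqrt v) * -(1 / (2 * Real.sqrt v)) = ncChiSqPDF l v := by
    unfold ncChiSqPDF
    rw [if_pos hv]
    have e1 : stdNormalPDF (Real.sqrt l - Real.sqrt v)
        = stdNormalPDF (Real.sqrt v - Real.sqrt l) := by
      rw [← snpdf_even (Real.sqrt v - Real.sqrt l)]; ring_nf
    have e2 : stdNormalPDF (Real.sqrt l + Real.sqrt v)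
        = stdNormalPDF (Real.sqrt v + Real.sqrt l) := by
      ring_nf
    rw [e1, e2]; ring
  rw [heq] at h
  exact h

lemma integral_ncpdf (l z : ℝ) (hz : 0 ≤ z) :
    ∫ v in (0:ℝ)..z, ncChiSqPDF l v = ncChiSqCDF l z := by
  rcases eq_or_lt_of_le hz with rfl | hz'
  · simp [nccdf_zero]
  set L : Filter ℝ := nhdsWithin 0 (Ioc (0:ℝ) z) with hL
  have hne : L.NeBot := by
    rw [hL]
    exact mem_closure_iff_nhdsWithin_neBot.1 (by
      have : (0:ℝ) ∈ closure (Ioc (0:ℝ) z) := by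
        rw [closure_Ioc hz'.ne]
        exact ⟨le_refl 0, hz⟩
      exact this)
  have hInt := ncpdf_intervalIntegrable l z hz
  have hcont : ContinuousOn (fun ε => ∫ t in ε..z, ncChiSqPDF l t) (uIcc (0:ℝ) z) := by
    apply intervalIntegral.continuousOn_primitive_interval_left
    rw [uIcc_of_le hz, integrableOn_Icc_iff_integrableOn_Ioc]
    exact (intervalIntegrable_iff_integrableOn_Ioc_of_le hz).1 hInt
  have h1 : Tendsto (fun ε => ∫ t in ε..z, ncChiSqPDF l t) L
      (nhds (∫ t in (0:ℝ)..z, ncChiSqPDF l t)) := by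
    have h0 : (0:ℝ) ∈ uIcc (0:ℝ) z := left_mem_uIcc
    have := (hcont 0 h0).tendsto
    refine this.mono_left ?_
    rw [hL, uIcc_of_le hz]
    exact nhdsWithin_mono 0 Ioc_subset_Icc_self
  have h2 : Tendsto (fun ε => ncChiSqCDF l z - ncChiSqCDF l ε) L
      (nhds (ncChiSqCDF l z)) := by
    have hc : Tendsto (fun ε => ncChiSqCDF l ε) L (nhds (ncChiSqCDF l 0)) :=
      ((nccdf_cont l).tendsto 0).mono_left nhdsWithin_le_nhds
    rw [nccdf_zero] at hc
    simpa using (tendsto_const_nhds (x := ncChiSqCDF l z)).sub hc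
  have hev : ∀ᶠ ε in L, (∫ t in ε..z, ncChiSqPDF l t) = ncChiSqCDF l z - ncChiSqCDF l ε := by
    rw [hL]
    filter_upwards [self_mem_nhdsWithin] with ε hε
    have hε0 : 0 < ε := hε.1
    have hεz : ε ≤ z := hε.2
    refine intervalIntegral.integral_eq_sub_of_hasDerivAt (fun x hx => ?_) ?_
    · rw [uIcc_of_le hεz] at hx
      exact nccdf_hasDerivAt l x (lt_of_lt_of_le hε0 hx.1)
    · exact hInt.mono_set' (by
        rw [uIoc_of_le hεz, uIoc_of_le hz]
        exact Ioc_subset_Ioc hε0.le le_rfl)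
  exact tendsto_nhds_unique (h1.congr' hev) h2

lemma nccdf_tendsto (z : ℝ) : Tendsto (fun l => ncChiSqCDF l z) atTop (nhds 0) := by
  have hub : ∀ l : ℝ, max z 0 ≤ l → ncChiSqCDF l z ≤
      2 * Real.sqrt z * stdNormalPDF (Real.sqrt l - Real.sqrt z) := by
    intro l hl
    have hzl : Real.sqrt z ≤ Real.sqrt l := Real.sqrt_le_sqrt (le_trans (le_max_left z 0) hl)
    have hnn : 0 ≤ Real.sqrt l - Real.sqrt z := by linarith
    unfold ncChiSqCDF
    rw [sncdf_sub]
    have hle : Real.sqrt l - Real.sqrt z ≤ Real.sqrt l + Real.sqrt z := by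
      have := Real.sqrt_nonneg z; linarith
    calc (∫ t in (Real.sqrt l - Real.sqrt z)..(Real.sqrt l + Real.sqrt z), stdNormalPDF t)
        ≤ ∫ _t in (Real.sqrt l - Real.sqrt z)..(Real.sqrt l + Real.sqrt z),
            stdNormalPDF (Real.sqrt l - Real.sqrt z) := by
          apply intervalIntegral.integral_mono_on hle
            snpdf_integrable.intervalIntegrable intervalIntegrable_const
          intro t ht
          unfold stdNormalPDF
          have h1 : Real.sqrt l - Real.sqrt z ≤ t := ht.1
          have hsq : (Real.sqrt l - Real.sqrt z)^2 ≤ t^2 := by nlinarith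
          have : Real.exp (-(t ^ 2) / 2) ≤ Real.exp (-((Real.sqrt l - Real.sqrt z) ^ 2) / 2) := by
            apply Real.exp_le_exp.2; linarith
          have h2 : (0:ℝ) ≤ (Real.sqrt (2 * Real.pi))⁻¹ := by positivity
          nlinarith
      _ = 2 * Real.sqrt z * stdNormalPDF (Real.sqrt l - Real.sqrt z) := by
          rw [intervalIntegral.integral_const, smul_eq_mul]
          ring_nf
  have hup : Tendsto (fun l => 2 * Real.sqrt z * stdNormalPDF (Real.sqrt l - Real.sqrt z))
      atTop (nhds 0) := by
    have hsqrt : Tendsto Real.sqrt atTop atTop := by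
      apply Tendsto.congr (f₁ := fun x : ℝ => x ^ (1/2 : ℝ))
      · intro x; rw [Real.sqrt_eq_rpow]
      · exact tendsto_rpow_atTop (by norm_num)
    have harg : Tendsto (fun l => Real.sqrt l - Real.sqrt z) atTop atTop :=
      tendsto_atTop_add_const_right atTop (-Real.sqrt z) hsqrt |>.congr (fun l => by ring)
    have hpdf : Tendsto stdNormalPDF atTop (nhds 0) := by
      unfold stdNormalPDF
      have hexp : Tendsto (fun x : ℝ => Real.exp (-(x ^ 2) / 2)) atTop (nhds 0) := by
        apply Real.tendsto_exp_atBot.comp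
        have hx2 : Tendsto (fun x : ℝ => x ^ 2) atTop atTop := tendsto_pow_atTop two_ne_zero
        have hdiv : Tendsto (fun x : ℝ => x ^ 2 / 2) atTop atTop :=
          hx2.atTop_div_const (by norm_num)
        have := tendsto_neg_atTop_atBot.comp hdiv
        exact this.congr (fun x => by simp; ring)
      simpa using hexp.const_mul (Real.sqrt (2 * Real.pi))⁻¹
    simpa using (hpdf.comp harg).const_mul (2 * Real.sqrt z)
  apply tendsto_of_tendsto_of_tendsto_of_le_of_le' tendsto_const_nhds hup
  · exact Eventually.of_forall (fun l => by
      have : Real.sqrt l - Real.sqrt z ≤ Real.sqrt l + Real.sqrt z := by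
        have := Real.sqrt_nonneg z; linarith
      unfold ncChiSqCDF; linarith [sncdf_mono this])
  · exact eventually_atTop.2 ⟨max z 0, hub⟩

/-! ### Bounds on the augmentation integral -/

lemma aug_integrand_intInt (l l' b z : ℝ) (hb : 0 < b) (hz : 0 ≤ z) :
    IntervalIntegrable (fun v => ncChiSqPDF l v * ncChiSqCDF l' (v / b)) volume 0 z := by
  refine intInt_of_bound _ z ((Real.sqrt (2*Real.pi))⁻¹) hz ?_ (fun v hv => ?_)
  · exact (((ncpdf_measurable l).mul
      (((nccdf_cont l').comp (continuous_id.div_const b)).measurable)).aestronglyMeasurable).restrict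
  · have h1 : 0 ≤ ncChiSqPDF l v := ncpdf_nonneg l v
    have h2 : 0 ≤ ncChiSqCDF l' (v / b) := nccdf_nonneg l' (v / b)
    rw [abs_of_nonneg (by positivity)]
    calc ncChiSqPDF l v * ncChiSqCDF l' (v / b) ≤ ncChiSqPDF l v * 1 :=
          mul_le_mul_of_nonneg_left (nccdf_le_one l' (v / b)) h1
      _ = ncChiSqPDF l v := mul_one _
      _ ≤ (Real.sqrt (2*Real.pi))⁻¹ * (Real.sqrt v)⁻¹ := ncpdf_le l v hv.1

lemma aug_bounds (l b z : ℝ) (hb : 0 < b) (hz : 0 ≤ z) :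
    0 ≤ (∫ v in (0:ℝ)..z,
          (ncChiSqPDF l v * ncChiSqCDF 0 (v / b) + ncChiSqPDF 0 v * ncChiSqCDF l (v / b))) ∧
    (∫ v in (0:ℝ)..z,
          (ncChiSqPDF l v * ncChiSqCDF 0 (v / b) + ncChiSqPDF 0 v * ncChiSqCDF l (v / b)))
      ≤ ncChiSqCDF 0 (z / b) * ncChiSqCDF l z + ncChiSqCDF 0 z * ncChiSqCDF l (z / b) := by
  have hIa := aug_integrand_intInt l 0 b z hb hz
  have hIb := aug_integrand_intInt 0 l b z hb hz
  have hI := hIa.add hIb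
  constructor
  · apply intervalIntegral.integral_nonneg hz
    intro v _
    have h1 := ncpdf_nonneg l v
    have h2 := ncpdf_nonneg 0 v
    have h3 := nccdf_nonneg (0:ℝ) (v / b)
    have h4 := nccdf_nonneg l (v / b)
    positivity
  · have hga : IntervalIntegrable (fun v => ncChiSqPDF l v * ncChiSqCDF 0 (z / b)) volume 0 z :=
      (ncpdf_intervalIntegrable l z hz).mul_const _
    have hgb : IntervalIntegrable (fun v => ncChiSqPDF 0 v * ncChiSqCDF l (z / b)) volume 0 z :=
      (ncpdf_intervalIntegrable 0 z hz).mul_const _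
    have hg := hga.add hgb
    have hmono : ∀ v ∈ Icc (0:ℝ) z,
        ncChiSqPDF l v * ncChiSqCDF 0 (v / b) + ncChiSqPDF 0 v * ncChiSqCDF l (v / b)
          ≤ ncChiSqPDF l v * ncChiSqCDF 0 (z / b) + ncChiSqPDF 0 v * ncChiSqCDF l (z / b) := by
      intro v hv
      have hdiv : v / b ≤ z / b := by gcongr; exact hv.2
      exact add_le_add
        (mul_le_mul_of_nonneg_left (nccdf_mono_v 0 hdiv) (ncpdf_nonneg l v))
        (mul_le_mul_of_nonneg_left (nccdf_mono_v l hdiv) (ncpdf_nonneg 0 v))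
    calc (∫ v in (0:ℝ)..z,
          (ncChiSqPDF l v * ncChiSqCDF 0 (v / b) + ncChiSqPDF 0 v * ncChiSqCDF l (v / b)))
        ≤ ∫ v in (0:ℝ)..z,
            (ncChiSqPDF l v * ncChiSqCDF 0 (z / b) + ncChiSqPDF 0 v * ncChiSqCDF l (z / b)) :=
          intervalIntegral.integral_mono_on hz hI hg hmono
      _ = (∫ v in (0:ℝ)..z, ncChiSqPDF l v * ncChiSqCDF 0 (z / b))
          + ∫ v in (0:ℝ)..z, ncChiSqPDF 0 v * ncChiSqCDF l (z / b) :=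
          intervalIntegral.integral_add hga hgb
      _ = (∫ v in (0:ℝ)..z, ncChiSqPDF l v) * ncChiSqCDF 0 (z / b)
          + (∫ v in (0:ℝ)..z, ncChiSqPDF 0 v) * ncChiSqCDF l (z / b) := by
          rw [intervalIntegral.integral_mul_const, intervalIntegral.integral_mul_const]
      _ = ncChiSqCDF 0 (z / b) * ncChiSqCDF l z + ncChiSqCDF 0 z * ncChiSqCDF l (z / b) := by
          rw [integral_ncpdf l z hz, integral_ncpdf 0 z hz]; ring

/-- The discrepancy of the simply-augmented LR(b) test tends to 0 as λ → ∞, and the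
augmentation integral obeys the stated bounds. -/
theorem discrepancy_tendsto_zero (α b zα : ℝ) (hα : α ∈ Set.Ioo (0:ℝ) 1)
    (hb : b ∈ Set.Ioc (0:ℝ) 1) (hz : ncChiSqCDF 0 zα = 1 - α) :
    Tendsto (fun l : ℝ =>
        (∫ v in (0:ℝ)..zα,
            (ncChiSqPDF l v * ncChiSqCDF 0 (v / b) + ncChiSqPDF 0 v * ncChiSqCDF l (v / b)))
          - ncChiSqCDF l zα) atTop (nhds 0) ∧
    ∀ l : ℝ, 0 ≤ l →
      0 ≤ (∫ v in (0:ℝ)..zα,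
            (ncChiSqPDF l v * ncChiSqCDF 0 (v / b) + ncChiSqPDF 0 v * ncChiSqCDF l (v / b))) ∧
      (∫ v in (0:ℝ)..zα,
            (ncChiSqPDF l v * ncChiSqCDF 0 (v / b) + ncChiSqPDF 0 v * ncChiSqCDF l (v / b)))
        ≤ ncChiSqCDF 0 (zα / b) * ncChiSqCDF l zα + ncChiSqCDF 0 zα * ncChiSqCDF l (zα / b) := by
  have hzα : 0 ≤ zα := by
    by_contra hneg
    push_neg at hneg
    rw [nccdf_nonpos 0 zα hneg.le] at hz
    linarith [hα.2]
  constructor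
  · -- the limit statement
    have hlow : Tendsto (fun l : ℝ => -ncChiSqCDF l zα) atTop (nhds 0) := by
      simpa using (nccdf_tendsto zα).neg
    have hupp : Tendsto (fun l : ℝ =>
        ncChiSqCDF 0 (zα / b) * ncChiSqCDF l zα + ncChiSqCDF 0 zα * ncChiSqCDF l (zα / b))
        atTop (nhds 0) := by
      have := ((nccdf_tendsto zα).const_mul (ncChiSqCDF 0 (zα / b))).add
        ((nccdf_tendsto (zα / b)).const_mul (ncChiSqCDF 0 zα))
      simpa using this
    apply tendsto_of_tendsto_of_tendsto_of_le_of_le hlow hupp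
    · intro l
      have h := (aug_bounds l b zα hb.1 hzα).1
      simp only
      linarith
    · intro l
      have h := (aug_bounds l b zα hb.1 hzα).2
      have h2 := nccdf_nonneg l zα
      simp only
      linarith
  · intro l _
    exact aug_bounds l b zα hb.1 hzα
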